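/- Conditioned on the collision event L(u)=L(v), the common minimizing index i* is uniformly distributed on S_u∩S_v; hence E[V(u)V(v) | L(u)=L(v)] = (Σᵢ uᵢvᵢ)/a. -/

import Mathlib

open Finset

lemma swap_image_self' {α : Type*} [DecidableEq α] {j k : α} {W : Finset α}
    (hj : j ∈ W) (hk : k ∈ W) : W.image (Equiv.swap j k) = W := by
  refine Finset.eq_of_subset_of_card_le ?_ ?_
  · intro x hx
    simp only [Finset.mem_image] at hx
    obtain ⟨y, hy, rfl⟩ := hx
    rcases eq_or_ne y j with rfl | hyj
    · simpa [Equiv.swap_apply_left] using hk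
    rcases eq_or_ne y k with rfl | hyk
    · simpa [Equiv.swap_apply_right] using hj
    · simpa [Equiv.swap_apply_of_ne_of_ne hyj hyk] using hy
  · rw [Finset.card_image_of_injective _ (Equiv.injective _)]

lemma min'_congr' {α : Type*} [LinearOrder α] {s t : Finset α}
    (h : s = t) (hs : s.Nonempty) (ht : t.Nonempty) : s.min' hs = t.min' ht := by
  subst h; rfl

lemma istar_swap (D : ℕ) (W : Finset (Fin D)) (hW : W.Nonempty)
    (istar : Equiv.Perm (Fin D) → Fin D)
    (histar : ∀ π : Equiv.Perm (Fin D),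
      istar π = π.symm ((W.image π).min' (hW.image π)))
    {j k : Fin D} (hj : j ∈ W) (hk : k ∈ W)
    (π : Equiv.Perm (Fin D)) (hπ : istar π = j) :
    istar (π * Equiv.swap j k) = k := by
  have hm : (W.image ⇑π).min' (hW.image ⇑π) = π j := by
    rw [histar] at hπ
    have := congrArg π hπ
    simpa using this
  have himg : W.image ⇑(π * Equiv.swap j k) = W.image ⇑π := by
    rw [Equiv.Perm.coe_mul, ← Finset.image_image, swap_image_self' hj hk]
  rw [histar, min'_congr' himg (hW.image _) (hW.image _), hm,
    Equiv.symm_apply_eq]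
  simp [Equiv.Perm.mul_apply, Equiv.swap_apply_right]

lemma fiber_const (D : ℕ) (W : Finset (Fin D)) (hW : W.Nonempty)
    (istar : Equiv.Perm (Fin D) → Fin D)
    (histar : ∀ π : Equiv.Perm (Fin D),
      istar π = π.symm ((W.image π).min' (hW.image π)))
    {j k : Fin D} (hj : j ∈ W) (hk : k ∈ W) :
    (Finset.univ.filter (fun π : Equiv.Perm (Fin D) => istar π = j)).card
      = (Finset.univ.filter (fun π : Equiv.Perm (Fin D) => istar π = k)).card := by
  refine Finset.card_bij' (fun π _ => π * Equiv.swap j k)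
    (fun π _ => π * Equiv.swap j k) ?_ ?_ ?_ ?_
  · intro π hπ
    simp only [mem_filter, mem_univ, true_and] at hπ ⊢
    exact istar_swap D W hW istar histar hj hk π hπ
  · intro π hπ
    simp only [mem_filter, mem_univ, true_and] at hπ ⊢
    have := istar_swap D W hW istar histar hk hj π hπ
    rwa [Equiv.swap_comm] at this
  · intro π _
    rw [mul_assoc, Equiv.swap_mul_self, mul_one]
  · intro π _
    rw [mul_assoc, Equiv.swap_mul_self, mul_one]

lemma fiber_pos (D : ℕ) (W : Finset (Fin D)) (hW : W.Nonempty)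
    (istar : Equiv.Perm (Fin D) → Fin D)
    (histar : ∀ π : Equiv.Perm (Fin D),
      istar π = π.symm ((W.image π).min' (hW.image π)))
    {j : Fin D} (hj : j ∈ W) :
    0 < (Finset.univ.filter (fun π : Equiv.Perm (Fin D) => istar π = j)).card := by
  rw [Finset.card_pos]
  have hD : 0 < D := j.pos
  refine ⟨Equiv.swap j ⟨0, hD⟩, ?_⟩
  simp only [mem_filter, mem_univ, true_and]
  rw [histar]
  have hmin : (W.image ⇑(Equiv.swap j ⟨0, hD⟩)).min' (hW.image _) = ⟨0, hD⟩ := by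
    apply le_antisymm
    · apply Finset.min'_le
      rw [Finset.mem_image]
      exact ⟨j, hj, Equiv.swap_apply_left _ _⟩
    · exact Finset.le_min' _ _ _ (fun y _ => by simp [Fin.le_def])
  rw [hmin]
  simp [Equiv.symm_swap, Equiv.swap_apply_right]

/-- Conditioned on the collision event {i* ∈ S_u∩S_v}, the minimizing index i* is
uniform on S_u∩S_v; hence E[V(u)V(v) | collision] = (Σᵢ uᵢvᵢ)/a. -/
theorem core2_conditional_uniform (D : ℕ) (u v : Fin D → ℝ)
    (Su Sv : Finset (Fin D))
    (hSu : Su = Finset.univ.filter (fun i => u i ≠ 0))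
    (hSv : Sv = Finset.univ.filter (fun i => v i ≠ 0))
    (a : ℕ) (ha : a = (Su ∩ Sv).card) (hapos : 0 < a)
    (hW : (Su ∪ Sv).Nonempty)
    (istar : Equiv.Perm (Fin D) → Fin D)
    (histar : ∀ π : Equiv.Perm (Fin D),
      istar π = π.symm (((Su ∪ Sv).image π).min' (hW.image π))) :
    (∀ j ∈ Su ∩ Sv,
      ((Finset.univ.filter (fun π : Equiv.Perm (Fin D) => istar π = j)).card : ℝ) /
        ((Finset.univ.filter
            (fun π : Equiv.Perm (Fin D) => istar π ∈ Su ∩ Sv)).card : ℝ)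
        = 1 / (a : ℝ)) ∧
    (∑ π ∈ Finset.univ.filter
          (fun π : Equiv.Perm (Fin D) => istar π ∈ Su ∩ Sv),
        u (istar π) * v (istar π)) /
      ((Finset.univ.filter
          (fun π : Equiv.Perm (Fin D) => istar π ∈ Su ∩ Sv)).card : ℝ)
      = (∑ i, u i * v i) / (a : ℝ) := by
  set S : Finset (Fin D) := Su ∩ Sv with hS
  set W : Finset (Fin D) := Su ∪ Sv with hWdef
  have hsub : S ⊆ W := (Finset.inter_subset_left).trans Finset.subset_union_left
  have hSne : S.Nonempty := Finset.card_pos.mp (ha ▸ hapos)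
  obtain ⟨j0, hj0⟩ := hSne
  set c : ℕ :=
    (Finset.univ.filter (fun π : Equiv.Perm (Fin D) => istar π = j0)).card with hcdef
  have hc : ∀ j ∈ S,
      (Finset.univ.filter (fun π : Equiv.Perm (Fin D) => istar π = j)).card = c :=
    fun j hj => fiber_const D W hW istar histar (hsub hj) (hsub hj0)
  have hcpos : 0 < c := fiber_pos D W hW istar histar (hsub hj0)
  set T := Finset.univ.filter (fun π : Equiv.Perm (Fin D) => istar π ∈ S) with hTdef
  have hfib : ∀ j ∈ S, T.filter (fun π => istar π = j)
      = Finset.univ.filter (fun π : Equiv.Perm (Fin D) => istar π = j) := by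
    intro j hj
    ext π
    simp only [hTdef, Finset.filter_filter, mem_filter, mem_univ, true_and]
    constructor
    · rintro ⟨-, h⟩; exact h
    · rintro rfl; exact ⟨hj, rfl⟩
  have hmaps : ∀ π ∈ T, istar π ∈ S := by
    intro π hπ; simpa [hTdef] using hπ
  have hT : T.card = a * c := by
    rw [Finset.card_eq_sum_card_fiberwise hmaps]
    rw [Finset.sum_congr rfl (fun j hj => by rw [hfib j hj, hc j hj])]
    simp [ha]
  have hsum : (∑ π ∈ T, u (istar π) * v (istar π)) = c * ∑ i, u i * v i := by
    rw [← Finset.sum_fiberwise_of_maps_to hmaps (fun π => u (istar π) * v (istar π))]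
    have hinner : ∀ j ∈ S,
        (∑ π ∈ T.filter (fun π => istar π = j), u (istar π) * v (istar π))
          = c * (u j * v j) := by
      intro j hj
      rw [Finset.sum_congr rfl (fun π hπ => by
        rw [(Finset.mem_filter.mp hπ).2]), Finset.sum_const, hfib j hj, hc j hj,
        nsmul_eq_mul]
    rw [Finset.sum_congr rfl hinner, ← Finset.mul_sum]
    congr 1
    have hzero : ∀ i ∈ (Finset.univ : Finset (Fin D)), i ∉ S → u i * v i = 0 := by
      intro i _ hi
      simp only [hS, Finset.mem_inter, hSu, hSv, mem_filter, mem_univ, true_and,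
        not_and, not_not] at hi
      by_cases hu : u i = 0
      · simp [hu]
      · simp [hi hu]
    exact Finset.sum_subset (Finset.subset_univ S) hzero
  have ha0 : (a : ℝ) ≠ 0 := Nat.cast_ne_zero.mpr hapos.ne'
  have hc0 : (c : ℝ) ≠ 0 := Nat.cast_ne_zero.mpr hcpos.ne'
  constructor
  · intro j hj
    rw [hc j hj, hT]
    push_cast
    field_simp
  · rw [hsum, hT]
    push_cast
    field_simp
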